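/- Let a, b, c, d, p, q, r, s, w be integers satisfying a·p + b·q = 1 + a·b and c·r + d·s = 1 + c·d, and set u = a·c + b·d and v = a·d − b·c. If u·w ≡ 1 (mod v), then (c² + d²)·(a·r − b·(c − s))·w ≡ 1 (mod v); that is, (a·r − b·(c − s))·w represents the modular inverse of c² + d² modulo v. -/

import Mathlib

/-!
Modulo `v = a * d - b * c` we have `a * d ≡ b * c`, and the relation `c * r + d * s = 1 + c * d`
shows that `x = a * r - b * (c - s)` satisfies `c * x ≡ a` and `d * x ≡ b`, i.e. `x` plays the
role of `a / c = b / d`. Hence `(c ^ 2 + d ^ 2) * x = c * (c * x) + d * (d * x) ≡ a * c + b * d`,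
and multiplying by the inverse `w` of `a * c + b * d` gives the claim.
-/

section Reciprocity

variable {a b c d r s : ℤ}

theorem c_mul_modEq_a (hcd : c * r + d * s = 1 + c * d) :
    c * (a * r - b * (c - s)) ≡ a [ZMOD a * d - b * c] :=
  (Int.modEq_iff_dvd.mpr ⟨c - s, by linear_combination a * hcd⟩).symm

theorem d_mul_modEq_b (hcd : c * r + d * s = 1 + c * d) :
    d * (a * r - b * (c - s)) ≡ b [ZMOD a * d - b * c] :=
  (Int.modEq_iff_dvd.mpr ⟨r, by linear_combination b * hcd⟩).symm

theorem sq_add_sq_mul_modEq (hcd : c * r + d * s = 1 + c * d) :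
    (c ^ 2 + d ^ 2) * (a * r - b * (c - s)) ≡ a * c + b * d [ZMOD a * d - b * c] :=
  calc (c ^ 2 + d ^ 2) * (a * r - b * (c - s))
      = c * (c * (a * r - b * (c - s))) + d * (d * (a * r - b * (c - s))) := by ring
    _ ≡ c * a + d * b [ZMOD a * d - b * c] :=
        ((c_mul_modEq_a hcd).mul_left c).add ((d_mul_modEq_b hcd).mul_left d)
    _ = a * c + b * d := by ring

end Reciprocity

theorem inverse_of_sum_of_squares_cd_mod_v_general
    (a b c d r s w : ℤ)
    (hcd : c * r + d * s = 1 + c * d)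
    (hw : (a * c + b * d) * w ≡ 1 [ZMOD a * d - b * c]) :
    (c ^ 2 + d ^ 2) * ((a * r - b * (c - s)) * w) ≡ 1 [ZMOD a * d - b * c] :=
  calc (c ^ 2 + d ^ 2) * ((a * r - b * (c - s)) * w)
      = (c ^ 2 + d ^ 2) * (a * r - b * (c - s)) * w := (mul_assoc _ _ _).symm
    _ ≡ (a * c + b * d) * w [ZMOD a * d - b * c] := (sq_add_sq_mul_modEq hcd).mul_right w
    _ ≡ 1 [ZMOD a * d - b * c] := hw

theorem inverse_of_sum_of_squares_cd_mod_v
    (a b c d p q r s w : ℤ)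
    (hab : a * p + b * q = 1 + a * b)
    (hcd : c * r + d * s = 1 + c * d)
    (hw : (a * c + b * d) * w ≡ 1 [ZMOD a * d - b * c]) :
    (c ^ 2 + d ^ 2) * ((a * r - b * (c - s)) * w) ≡ 1 [ZMOD a * d - b * c] :=
  inverse_of_sum_of_squares_cd_mod_v_general a b c d r s w hcd hw
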